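/- Let W = [[a,b],[c,d]] ∈ SL(2,ℂ) with c ≠ 0, and suppose the image of the lower half plane under the Möbius transformation z ↦ (az+b)/(cz+d) is a disk contained in the upper half plane {Im z > 0}. Then Im(c·conj(d)) > 0 and Re(b·conj(c) − a·conj(d)) ≥ 1. -/

import Mathlib

/-!
Writing `z = x + iy`, the sign of `Im f(z)` for `f(z) = (az + b)/(cz + d)` is that of
`Im((az + b) · conj(cz + d)) = α|z|² + βx + γy + δ`, a real form whose coefficients satisfy
`β² + γ² - 4αδ = |ad - bc|² = 1`. Completing the square, `4α` times the form is
`(2αx + β)² + (2αy + γ)² - 1`, and positivity on the whole lower half plane forces `γ ≤ -1`,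
i.e. `Re(b conj c - a conj d) ≥ 1`.

The image being a disk, it is bounded; if the pole `-d/c` lay in the closed lower half plane,
points of the lower half plane next to it would be sent arbitrarily far away.
-/

open Complex ComplexConjugate

def circleForm (α β γ δ x y : ℝ) : ℝ := α * (x ^ 2 + y ^ 2) + β * x + γ * y + δ

section CircleForm

variable {α β γ δ : ℝ}

lemma four_mul_circleForm (hdisc : β ^ 2 + γ ^ 2 - 4 * α * δ = 1) (x y : ℝ) :
    4 * α * circleForm α β γ δ x y = (2 * α * x + β) ^ 2 + (2 * α * y + γ) ^ 2 - 1 := by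
  unfold circleForm
  linear_combination (-1 : ℝ) * hdisc

variable (hdisc : β ^ 2 + γ ^ 2 - 4 * α * δ = 1)
  (hpos : ∀ x y : ℝ, y < 0 → 0 < circleForm α β γ δ x y)
include hdisc hpos

lemma nonneg_of_circleForm_pos : 0 ≤ α := by
  by_contra! hα
  have hα₀ := hα.ne
  have hx : 2 * α * ((2 - β) / (2 * α)) + β = 2 := by field_simp; ring
  have h := four_mul_circleForm hdisc ((2 - β) / (2 * α)) (-1)
  rw [hx] at h
  nlinarith [hpos ((2 - β) / (2 * α)) (-1) (by norm_num), sq_nonneg (2 * α * -1 + γ)]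

lemma le_neg_one_of_circleForm_pos_of_pos (hα : 0 < α) : γ ≤ -1 := by
  by_contra! hγ
  have hα₀ := hα.ne'
  -- On the line `x = -β/(2α)` we have `4αQ = t² - 1` with `t = 2αy + γ` sweeping `(-∞, γ)`.
  set t := min 0 ((γ - 1) / 2)
  have ht₁ : -1 < t := lt_min (by norm_num) (by linarith)
  have ht₂ : t < γ := (min_le_right _ _).trans_lt (by linarith)
  have ht₃ : t ≤ 0 := min_le_left _ _
  have hx : 2 * α * (-β / (2 * α)) + β = 0 := by field_simp; ring
  have hy : 2 * α * ((t - γ) / (2 * α)) + γ = t := by field_simp; ring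
  have h := four_mul_circleForm hdisc (-β / (2 * α)) ((t - γ) / (2 * α))
  rw [hx, hy] at h
  have := hpos (-β / (2 * α)) ((t - γ) / (2 * α))
    (div_neg_of_neg_of_pos (by linarith) (by linarith))
  nlinarith

lemma le_neg_one_of_circleForm_pos_of_eq_zero (hα : α = 0) : γ ≤ -1 := by
  subst hα
  by_contra! hγ
  set s := (|δ| + 1) / (1 + γ)
  have hs : s * (1 + γ) = |δ| + 1 := div_mul_cancel₀ _ (by linarith)
  have hval : circleForm 0 β γ δ (-s * β) (-s * (1 + γ)) = δ - (|δ| + 1) := by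
    unfold circleForm
    linear_combination (-s) * hdisc - hs
  have := hpos (-s * β) (-s * (1 + γ)) (by nlinarith [abs_nonneg δ])
  linarith [le_abs_self δ]

theorem le_neg_one_of_circleForm_pos : γ ≤ -1 := by
  rcases (nonneg_of_circleForm_pos hdisc hpos).eq_or_lt with hα | hα
  · exact le_neg_one_of_circleForm_pos_of_eq_zero hdisc hpos hα.symm
  · exact le_neg_one_of_circleForm_pos_of_pos hdisc hpos hα

end CircleForm

lemma im_div_eq_im_mul_conj_div (w v : ℂ) : (w / v).im = (w * conj v).im / normSq v := by
  rw [div_im, mul_im, conj_re, conj_im]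
  ring

lemma im_mul_conj_pos_of_im_div_pos {w v : ℂ} (h : 0 < (w / v).im) : 0 < (w * conj v).im := by
  rw [im_div_eq_im_mul_conj_div] at h
  by_contra! h'
  exact h.not_ge (div_nonpos_of_nonpos_of_nonneg h' (normSq_nonneg v))

lemma im_neg_div_eq (c d : ℂ) : (-d / c).im = (c * conj d).im / normSq c := by
  rw [im_div_eq_im_mul_conj_div]
  simp only [mul_im, neg_re, neg_im, conj_re, conj_im]
  ring

lemma im_mul_conj_eq_circleForm (a b c d z : ℂ) :
    ((a * z + b) * conj (c * z + d)).im =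
      circleForm (a * conj c).im (a * conj d - conj b * c).im (a * conj d - conj b * c).re
        (b * conj d).im z.re z.im := by
  simp only [circleForm, mul_im, mul_re, add_re, add_im, sub_re, sub_im, conj_re, conj_im]
  ring

lemma circleForm_coeff_discr (a b c d : ℂ) :
    (a * conj d - conj b * c).im ^ 2 + (a * conj d - conj b * c).re ^ 2
      - 4 * (a * conj c).im * (b * conj d).im = normSq (a * d - b * c) := by
  simp only [normSq_apply, mul_im, mul_re, sub_re, sub_im, conj_re, conj_im]
  ring

lemma mobius_eq_div_sub {a b c d z : ℂ} (hc : c ≠ 0) (hz : c * z + d ≠ 0) :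
    (a * z + b) / (c * z + d) = a / c - (a * d - b * c) / (c * (c * z + d)) := by
  rw [div_sub_div _ _ hc (mul_ne_zero hc hz),
    div_eq_div_iff hz (mul_ne_zero hc (mul_ne_zero hc hz))]
  ring

lemma im_mul_conj_pos_of_isBounded_image {a b c d : ℂ} (hdet : a * d - b * c ≠ 0) (hc : c ≠ 0)
    (hbdd : Bornology.IsBounded ((fun z => (a * z + b) / (c * z + d)) '' {z | z.im < 0})) :
    0 < (c * conj d).im := by
  by_contra! hk
  obtain ⟨R, hR⟩ := hbdd.exists_norm_le
  set K := ‖a / c‖ + |R| + 1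
  set ε := ‖a * d - b * c‖ / (K * ‖c‖ ^ 2)
  have hε : 0 < ε := by positivity
  set z := -d / c - ε * I
  have hz : z.im < 0 := by
    have : (-d / c).im ≤ 0 := by
      rw [im_neg_div_eq]
      exact div_nonpos_of_nonpos_of_nonneg hk (normSq_nonneg c)
    simp only [z, sub_im, mul_im, ofReal_re, ofReal_im, I_re, I_im, mul_one, mul_zero, add_zero]
    linarith
  have hden : c * z + d = -(ε * I * c) := by simp only [z]; field_simp; ring
  have hfar : ‖(a * d - b * c) / (c * (c * z + d))‖ = K := by
    rw [hden, norm_div, norm_mul, norm_neg, norm_mul, norm_mul, norm_I, norm_real,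
      Real.norm_of_nonneg hε.le]
    have : 0 < K := by positivity
    simp only [ε]
    field_simp
  have hfz : ‖(a * z + b) / (c * z + d)‖ ≤ R := hR _ ⟨z, hz, rfl⟩
  rw [mobius_eq_div_sub hc (by rw [hden]; simp [hε.ne', hc])] at hfz
  have := norm_sub_norm_le ((a * d - b * c) / (c * (c * z + d))) (a / c)
  rw [norm_sub_rev, hfar] at this
  linarith [le_abs_self R]

lemma one_le_re_of_forall_im_pos {a b c d : ℂ} (hdet : a * d - b * c = 1)
    (hpos : ∀ z : ℂ, z.im < 0 → 0 < ((a * z + b) / (c * z + d)).im) :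
    1 ≤ (b * conj c - a * conj d).re := by
  have hdisc := circleForm_coeff_discr a b c d
  rw [hdet, map_one] at hdisc
  have hγ := le_neg_one_of_circleForm_pos hdisc fun x y hy => by
    have h := im_mul_conj_pos_of_im_div_pos (hpos ⟨x, y⟩ hy)
    rwa [im_mul_conj_eq_circleForm] at h
  have hre : (b * conj c - a * conj d).re = -(a * conj d - conj b * c).re := by
    simp only [sub_re, mul_re, conj_re, conj_im]
    ring
  linarith

theorem wright_inequality_general (a b c d : ℂ) (hdet : a * d - b * c = 1) (hc : c ≠ 0)
    (z0 : ℂ) (r : ℝ)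
    (himg : (fun z : ℂ => (a * z + b) / (c * z + d)) '' {z : ℂ | z.im < 0} =
      Metric.ball z0 r)
    (hsub : Metric.ball z0 r ⊆ {z : ℂ | 0 < z.im}) :
    0 < (c * conj d).im ∧ 1 ≤ (b * conj c - a * conj d).re :=
  ⟨im_mul_conj_pos_of_isBounded_image (hdet ▸ one_ne_zero) hc (himg ▸ Metric.isBounded_ball),
    one_le_re_of_forall_im_pos hdet fun z hz => hsub (himg.subset ⟨z, hz, rfl⟩)⟩

/-- Let W = [[a,b],[c,d]] ∈ SL(2,ℂ) with c ≠ 0, and suppose the image of the lower half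
plane under z ↦ (az+b)/(cz+d) is a disk (an open metric ball) contained in the upper half
plane. Then Im(c·conj d) > 0 and Re(b·conj c − a·conj d) ≥ 1. -/
theorem wright_inequality (a b c d : ℂ) (hdet : a * d - b * c = 1) (hc : c ≠ 0)
    (z0 : ℂ) (r : ℝ) (hr : 0 < r)
    (himg : (fun z : ℂ => (a * z + b) / (c * z + d)) '' {z : ℂ | z.im < 0} =
      Metric.ball z0 r)
    (hsub : Metric.ball z0 r ⊆ {z : ℂ | 0 < z.im}) :
    0 < (c * conj d).im ∧ 1 ≤ (b * conj c - a * conj d).re :=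
  wright_inequality_general a b c d hdet hc z0 r himg hsub
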